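/- Let n, d be positive integers, σ > 0, let μ ∈ ℝ^d be a unit vector, let y ∈ {−1,1}ⁿ, and let Ξ ∈ ℝ^{d×n} be a matrix whose columns are all orthogonal to μ. Let δ ∈ [0, 1/2] and suppose ‖(1/(σ²d))·ΞᵀΞ − I_n‖₂ ≤ δ, where ‖·‖₂ is the spectral norm. Set X := μyᵀ + Ξ ∈ ℝ^{d×n}. Then for every a ∈ ℝⁿ, with w := Xa and ŷ := Xᵀw ∈ ℝⁿ, we have μᵀw ≥ (yᵀŷ − 2δ·σ·√d·‖y‖₂·‖w‖₂)/(σ²d + ‖y‖₂²). -/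

import Mathlib

open MeasureTheory Real
open scoped RealInnerProductSpace ENNReal NNReal

noncomputable section

/-- Euclidean space ℝ^d. -/
abbrev Euc (d : ℕ) : Type := EuclideanSpace ℝ (Fin d)

/-- The uniform probability measure on the unit sphere of `ℝ^k`, viewed as a
measure on `ℝ^k`. -/
noncomputable def unitSphereUniform (k : ℕ) : Measure (Euc k) :=
  ((volume : Measure (Euc k)).toSphere Set.univ)⁻¹ •
    Measure.map Subtype.val ((volume : Measure (Euc k)).toSphere)

/-- The uniform probability measure on the sphere of radius `r` inside the
subspace `K` of `ℝ^d`, viewed as a measure on `ℝ^d`. -/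
noncomputable def subSphereUniform {d : ℕ} (K : Submodule ℝ (Euc d)) (r : ℝ) :
    Measure (Euc d) :=
  Measure.map (fun z => r • (((stdOrthonormalBasis ℝ K).repr.symm z : K) : Euc d))
    (unitSphereUniform (Module.finrank ℝ K))

/-- The uniform distribution on `{1, -1} ⊆ ℝ`. -/
noncomputable def signUniform : Measure ℝ :=
  ((2 : ℝ≥0)⁻¹ : ℝ≥0) • (Measure.dirac (1 : ℝ) + Measure.dirac (-1 : ℝ))

/-- The linear data distribution `D_{μ,σ,d}` on `ℝ^d × ℝ`:  `y` uniform on `{±1}`,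
`ξ` uniform on the sphere of radius `√(d-1)·σ` in the hyperplane orthogonal to `μ`,
and `x = y•μ + ξ`. -/
noncomputable def linearDist (d : ℕ) (μ : Euc d) (σ : ℝ) : Measure (Euc d × ℝ) :=
  Measure.map (fun p : ℝ × Euc d => (p.1 • μ + p.2, p.1))
    (signUniform.prod
      (subSphereUniform (Submodule.span ℝ {μ})ᗮ (Real.sqrt ((d : ℝ) - 1) * σ)))

/-- The uniform distribution on `{μ₁, -μ₁, μ₂, -μ₂}`. -/
noncomputable def fourUniform {d : ℕ} (μ₁ μ₂ : Euc d) : Measure (Euc d) :=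
  ((4 : ℝ≥0)⁻¹ : ℝ≥0) •
    (Measure.dirac μ₁ + Measure.dirac (-μ₁) + Measure.dirac μ₂ + Measure.dirac (-μ₂))

/-- The XOR data distribution `D_{μ₁,μ₂,σ,d}` on `ℝ^d × ℝ`: `z` uniform on
`{±μ₁, ±μ₂}`, `ξ` uniform on the sphere of radius `√(d-2)·σ` in the subspace
orthogonal to `μ₁, μ₂`, `x = z + ξ`, and `y = ⟪μ₁,x⟫² - ⟪μ₂,x⟫²`. -/
noncomputable def xorDist (d : ℕ) (μ₁ μ₂ : Euc d) (σ : ℝ) : Measure (Euc d × ℝ) :=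
  Measure.map (fun p : Euc d × Euc d =>
      (p.1 + p.2, ⟪μ₁, p.1 + p.2⟫ ^ 2 - ⟪μ₂, p.1 + p.2⟫ ^ 2))
    ((fourUniform μ₁ μ₂).prod
      (subSphereUniform (Submodule.span ℝ {μ₁, μ₂})ᗮ (Real.sqrt ((d : ℝ) - 2) * σ)))

/-- The distribution of an i.i.d. sample of size `n` from `D`. -/
noncomputable def iid {α : Type*} [MeasurableSpace α] (n : ℕ) (D : Measure α) :
    Measure (Fin n → α) :=
  Measure.pi fun _ => D

/-- "With probability at least `p` over `s ∼ μ`, `Φ s` holds". -/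
def withProb {α : Type*} [MeasurableSpace α] (μ : Measure α) (p : ℝ) (Φ : α → Prop) : Prop :=
  ∃ E : Set α, MeasurableSet E ∧ ENNReal.ofReal p ≤ μ E ∧ ∀ s ∈ E, Φ s

/-- 0/1 test loss of a classifier `g` under distribution `D`. -/
noncomputable def testLoss {d : ℕ} (D : Measure (Euc d × ℝ)) (g : Euc d → ℝ) : ℝ :=
  (D {p | p.2 * g p.1 ≤ 0}).toReal

/-- Empirical 0/1 loss on a sample `S`. -/
noncomputable def empLoss {d : ℕ} (n : ℕ) (S : Fin n → Euc d × ℝ) (g : Euc d → ℝ) : ℝ :=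
  ((Finset.univ.filter fun j => (S j).2 * g ((S j).1) ≤ 0).card : ℝ) / n

/-- Margin of classifier `g` on the sample `S`: `min_j y_j g(x_j)`. -/
noncomputable def margin {d : ℕ} (n : ℕ) (g : Euc d → ℝ) (S : Fin n → Euc d × ℝ) : ℝ :=
  ⨅ j : Fin n, (S j).2 * g ((S j).1)

/-- Max margin over unit-norm linear classifiers. -/
noncomputable def linMaxMargin {d : ℕ} (n : ℕ) (S : Fin n → Euc d × ℝ) : ℝ :=
  ⨆ w : {w : Euc d // ‖w‖ ≤ 1}, margin n (fun x => ⟪(w : Euc d), x⟫) S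

/-- The activation `φ(z) = max(0,z)^h`. -/
noncomputable def phi (h z : ℝ) : ℝ := max 0 z ^ h

/-- Two-layer network `f_W(x) = (1/m) ∑ i, a i * φ(⟪w_i, x⟫)`. -/
noncomputable def netFun {d : ℕ} (h : ℝ) (m : ℕ) (a : Fin m → ℝ) (W : Fin m → Euc d)
    (x : Euc d) : ℝ :=
  (∑ i, a i * phi h ⟪W i, x⟫) / m

/-- Norm of a weight matrix: `√((1/m) ∑ i ‖w_i‖²)`. -/
noncomputable def wnorm {d : ℕ} (m : ℕ) (W : Fin m → Euc d) : ℝ :=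
  Real.sqrt ((∑ i, ‖W i‖ ^ 2) / m)

/-- Max margin over weight matrices of norm at most 1. -/
noncomputable def xorMaxMargin {d : ℕ} (h : ℝ) (m n : ℕ) (a : Fin m → ℝ)
    (S : Fin n → Euc d × ℝ) : ℝ :=
  ⨆ W : {W : Fin m → Euc d // wnorm m W ≤ 1},
    margin n (netFun h m a (W : Fin m → Euc d)) S

/-- `κ` is the threshold `κ_gen^{XOR,h}`: the positive solution of
`2^{1/h}·√(2/κ) = √(κ/(4+κ)) + √(16/(κ(4+κ)))`. -/
def IsKappaGen (h κ : ℝ) : Prop :=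
  0 < κ ∧ (2 : ℝ) ^ (1 / h) * Real.sqrt (2 / κ) =
    Real.sqrt (κ / (4 + κ)) + Real.sqrt (16 / (κ * (4 + κ)))

/-- ℓ₂ operator norm of a square matrix. -/
noncomputable def matOpNorm {n : ℕ} (M : Matrix (Fin n) (Fin n) ℝ) : ℝ :=
  ‖(Matrix.toEuclideanCLM (𝕜 := ℝ) M : EuclideanSpace ℝ (Fin n) →L[ℝ] EuclideanSpace ℝ (Fin n))‖

/-- Gram matrix of a family of vectors. -/
noncomputable def gram {d n : ℕ} (Ξ : Fin n → Euc d) : Matrix (Fin n) (Fin n) ℝ :=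
  Matrix.of fun i j => ⟪Ξ i, Ξ j⟫

end

/-!
Write `w = s • μ + v` with `s = ⟪μ, w⟫ = aᵀy` and `v = Ξa ⊥ μ`. Then `yᵀŷ = s‖y‖² + yᵀΞᵀΞa`,
and since `ΞᵀΞ` is within `σ²dδ` of `σ²d·I` in operator norm, `yᵀΞᵀΞa = σ²d·s` up to an error
`σ²dδ‖y‖‖a‖`. The same near-isometry with `δ ≤ 1/2` gives `σ²d‖a‖² ≤ 2‖v‖² ≤ 2‖w‖²`, so the
error is at most `2δσ√d‖y‖‖w‖`.
-/

open WithLp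
open scoped Matrix

theorem abs_dotProduct_mulVec_le_matOpNorm {n : ℕ} (M : Matrix (Fin n) (Fin n) ℝ)
    (u v : Fin n → ℝ) :
    |u ⬝ᵥ M *ᵥ v| ≤ matOpNorm M * ‖toLp 2 u‖ * ‖toLp 2 v‖ := by
  rw [← Matrix.inner_toEuclideanCLM M (toLp 2 u) (toLp 2 v), mul_comm (matOpNorm M), mul_assoc]
  exact (abs_real_inner_le_norm _ _).trans
    (mul_le_mul_of_nonneg_left (ContinuousLinearMap.le_opNorm _ _) (norm_nonneg _))

theorem abs_dotProduct_mulVec_sub_le_of_matOpNorm_le {n : ℕ} {M : Matrix (Fin n) (Fin n) ℝ}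
    {c δ : ℝ} (hc : 0 < c) (hM : matOpNorm (c⁻¹ • M - 1) ≤ δ) (u v : Fin n → ℝ) :
    |u ⬝ᵥ M *ᵥ v - c * (u ⬝ᵥ v)| ≤ c * δ * ‖toLp 2 u‖ * ‖toLp 2 v‖ := by
  have hdecomp : u ⬝ᵥ M *ᵥ v - c * (u ⬝ᵥ v) = c * (u ⬝ᵥ (c⁻¹ • M - 1) *ᵥ v) := by
    simp only [Matrix.sub_mulVec, Matrix.smul_mulVec, Matrix.one_mulVec, dotProduct_sub,
      dotProduct_smul, smul_eq_mul]
    field_simp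
  rw [hdecomp, abs_mul, abs_of_pos hc, mul_assoc c, mul_assoc c]
  gcongr
  exact (abs_dotProduct_mulVec_le_matOpNorm _ u v).trans (by gcongr)

theorem dotProduct_gram_mulVec {d n : ℕ} (Ξ : Fin n → Euc d) (u v : Fin n → ℝ) :
    u ⬝ᵥ gram Ξ *ᵥ v = ⟪∑ i, u i • Ξ i, ∑ j, v j • Ξ j⟫ := by
  have h := Matrix.star_dotProduct_gram_mulVec (𝕜 := ℝ) Ξ u v
  rw [star_trivial] at h
  exact h

theorem mul_sq_norm_le_sq_norm_sum_smul {d n : ℕ} {Ξ : Fin n → Euc d} {c δ : ℝ} (hc : 0 < c)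
    (hΞ : matOpNorm (c⁻¹ • gram Ξ - 1) ≤ δ) (a : Fin n → ℝ) :
    c * (1 - δ) * ‖toLp 2 a‖ ^ 2 ≤ ‖∑ j, a j • Ξ j‖ ^ 2 := by
  have hcross := abs_dotProduct_mulVec_sub_le_of_matOpNorm_le hc hΞ a a
  have haa : a ⬝ᵥ a = ‖toLp 2 a‖ ^ 2 := by
    rw [← real_inner_self_eq_norm_sq, EuclideanSpace.inner_toLp_toLp, star_trivial]
  rw [dotProduct_gram_mulVec, real_inner_self_eq_norm_sq, haa] at hcross
  linarith [neg_abs_le (‖∑ j, a j • Ξ j‖ ^ 2 - c * ‖toLp 2 a‖ ^ 2)]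

theorem mul_norm_le_two_sqrt_mul_norm_sum_smul {d n : ℕ} {Ξ : Fin n → Euc d} {c δ : ℝ}
    (hc : 0 < c) (hΞ : matOpNorm (c⁻¹ • gram Ξ - 1) ≤ δ) (hδ : δ ≤ 1 / 2) (a : Fin n → ℝ) :
    c * ‖toLp 2 a‖ ≤ 2 * √c * ‖∑ j, a j • Ξ j‖ := by
  have hframe := mul_le_mul_of_nonneg_left (mul_sq_norm_le_sq_norm_sum_smul hc hΞ a) hc.le
  rw [← pow_le_pow_iff_left₀ (by positivity) (by positivity) two_ne_zero, mul_pow, mul_pow,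
    mul_pow, sq_sqrt hc.le]
  nlinarith [mul_nonneg (sub_nonneg.2 hδ) (by positivity : 0 ≤ c ^ 2 * ‖toLp 2 a‖ ^ 2),
    mul_nonneg hc.le (sq_nonneg ‖∑ j, a j • Ξ j‖)]

section SignalPlusNoise

variable {F : Type*} [NormedAddCommGroup F] [InnerProductSpace ℝ F] {n : ℕ} {μ : F}
  {Ξ : Fin n → F}

theorem sum_smul_smul_add (y a : Fin n → ℝ) :
    ∑ j, a j • (y j • μ + Ξ j) = (a ⬝ᵥ y) • μ + ∑ j, a j • Ξ j := by
  simp only [smul_add, smul_smul, Finset.sum_add_distrib, dotProduct, Finset.sum_smul]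

theorem inner_sum_smul_eq_zero (hperp : ∀ j, ⟪μ, Ξ j⟫ = 0) (a : Fin n → ℝ) :
    ⟪μ, ∑ j, a j • Ξ j⟫ = 0 := by
  simp [inner_sum, real_inner_smul_right, hperp]

theorem inner_sum_smul_smul_add (hμ : ‖μ‖ = 1) (hperp : ∀ j, ⟪μ, Ξ j⟫ = 0) (y a : Fin n → ℝ) :
    ⟪μ, ∑ j, a j • (y j • μ + Ξ j)⟫ = a ⬝ᵥ y := by
  rw [sum_smul_smul_add, inner_add_right, inner_sum_smul_eq_zero hperp, real_inner_smul_right,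
    real_inner_self_eq_norm_sq, hμ]
  ring

theorem norm_sum_smul_le_norm_sum_smul_smul_add (hperp : ∀ j, ⟪μ, Ξ j⟫ = 0)
    (y a : Fin n → ℝ) :
    ‖∑ j, a j • Ξ j‖ ≤ ‖∑ j, a j • (y j • μ + Ξ j)‖ := by
  have horth : ⟪(a ⬝ᵥ y) • μ, ∑ j, a j • Ξ j⟫ = 0 := by
    rw [real_inner_smul_left, inner_sum_smul_eq_zero hperp, mul_zero]
  rw [← pow_le_pow_iff_left₀ (norm_nonneg _) (norm_nonneg _) two_ne_zero, sum_smul_smul_add,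
    norm_add_sq_real, horth]
  nlinarith [sq_nonneg ‖(a ⬝ᵥ y) • μ‖]

theorem sum_mul_inner_smul_add_sum_smul (hμ : ‖μ‖ = 1) (hperp : ∀ j, ⟪μ, Ξ j⟫ = 0)
    (y a : Fin n → ℝ) :
    ∑ j, y j * ⟪y j • μ + Ξ j, ∑ k, a k • (y k • μ + Ξ k)⟫ =
      (a ⬝ᵥ y) * ∑ j, y j ^ 2 + ⟪∑ j, y j • Ξ j, ∑ k, a k • Ξ k⟫ := by
  have hterm : ∀ j, ⟪y j • μ + Ξ j, ∑ k, a k • (y k • μ + Ξ k)⟫ =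
      y j * (a ⬝ᵥ y) + ⟪Ξ j, ∑ k, a k • Ξ k⟫ := fun j => by
    rw [inner_add_left, real_inner_smul_left, inner_sum_smul_smul_add hμ hperp,
      sum_smul_smul_add, inner_add_right, real_inner_smul_right, real_inner_comm, hperp, mul_zero,
      zero_add]
  simp only [hterm, mul_add, Finset.sum_add_distrib, sum_inner, real_inner_smul_left,
    Finset.mul_sum]
  congr 1
  exact Finset.sum_congr rfl fun j _ => by ring

end SignalPlusNoise

theorem stmt13_general (n d : ℕ) (hd : 0 < d) (σ : ℝ) (hσ : 0 < σ)
    (μ : Euc d) (hμ : ‖μ‖ = 1) (y : Fin n → ℝ)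
    (Ξ : Fin n → Euc d) (hperp : ∀ j, ⟪μ, Ξ j⟫ = 0)
    (δ : ℝ) (hδ0 : 0 ≤ δ) (hδ1 : δ ≤ 1 / 2)
    (hop : matOpNorm ((σ ^ 2 * d)⁻¹ • gram Ξ - 1) ≤ δ)
    (a : Fin n → ℝ) (X : Fin n → Euc d) (w : Euc d) (yhat : Fin n → ℝ)
    (hX : ∀ j, X j = y j • μ + Ξ j)
    (hw : w = ∑ j, a j • X j)
    (hyhat : ∀ j, yhat j = ⟪X j, w⟫) :
    ⟪μ, w⟫ ≥ ((∑ j, y j * yhat j) -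
        2 * δ * σ * Real.sqrt d * Real.sqrt (∑ j, y j ^ 2) * ‖w‖) /
      (σ ^ 2 * d + ∑ j, y j ^ 2) := by
  simp only [hX] at hw hyhat
  set c := σ ^ 2 * d
  have hc : 0 < c := by positivity
  have hsignal : ⟪μ, w⟫ = a ⬝ᵥ y := hw ▸ inner_sum_smul_smul_add hμ hperp y a
  have hcorr : ∑ j, y j * yhat j = (a ⬝ᵥ y) * ∑ j, y j ^ 2 + y ⬝ᵥ gram Ξ *ᵥ a := by
    simp only [hyhat, hw, dotProduct_gram_mulVec]
    exact sum_mul_inner_smul_add_sum_smul hμ hperp y a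
  have hcoef : c * ‖toLp 2 a‖ ≤ 2 * σ * √d * ‖w‖ := calc
    _ ≤ 2 * √c * ‖∑ j, a j • Ξ j‖ := mul_norm_le_two_sqrt_mul_norm_sum_smul hc hop hδ1 a
    _ ≤ 2 * √c * ‖w‖ := by
      gcongr
      exact hw ▸ norm_sum_smul_le_norm_sum_smul_smul_add hperp y a
    _ = 2 * σ * √d * ‖w‖ := by
      rw [sqrt_mul (sq_nonneg σ), sqrt_sq hσ.le]
      ring
  have herr : y ⬝ᵥ gram Ξ *ᵥ a - c * (a ⬝ᵥ y) ≤ 2 * δ * σ * √d * ‖toLp 2 y‖ * ‖w‖ := calc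
    _ ≤ c * δ * ‖toLp 2 y‖ * ‖toLp 2 a‖ := by
      rw [dotProduct_comm a]
      exact (le_abs_self _).trans (abs_dotProduct_mulVec_sub_le_of_matOpNorm_le hc hop y a)
    _ = δ * ‖toLp 2 y‖ * (c * ‖toLp 2 a‖) := by ring
    _ ≤ δ * ‖toLp 2 y‖ * (2 * σ * √d * ‖w‖) := by gcongr
    _ = 2 * δ * σ * √d * ‖toLp 2 y‖ * ‖w‖ := by ring
  have hy_norm : ‖toLp 2 y‖ = √(∑ j, y j ^ 2) := by
    simp [EuclideanSpace.norm_eq]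
  rw [ge_iff_le, div_le_iff₀ (by positivity), hsignal, hcorr, ← hy_norm]
  linarith

/-- **Signal correlation of vectors in the span of the data.**
Let `X = μyᵀ + Ξ` where the columns of `Ξ` are orthogonal to the unit vector
`μ` and `‖(1/(σ²d))ΞᵀΞ - I‖₂ ≤ δ ≤ 1/2`. Then for every coefficient vector
`a`, with `w = Xa` and `ŷ = Xᵀw`,
`μᵀw ≥ (yᵀŷ - 2δσ√d‖y‖‖w‖)/(σ²d + ‖y‖²)`. -/
theorem stmt13 (n d : ℕ) (hn : 0 < n) (hd : 0 < d) (σ : ℝ) (hσ : 0 < σ)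
    (μ : Euc d) (hμ : ‖μ‖ = 1) (y : Fin n → ℝ) (hy : ∀ j, y j = 1 ∨ y j = -1)
    (Ξ : Fin n → Euc d) (hperp : ∀ j, ⟪μ, Ξ j⟫ = 0)
    (δ : ℝ) (hδ0 : 0 ≤ δ) (hδ1 : δ ≤ 1 / 2)
    (hop : matOpNorm ((σ ^ 2 * d)⁻¹ • gram Ξ - 1) ≤ δ)
    (a : Fin n → ℝ) (X : Fin n → Euc d) (w : Euc d) (yhat : Fin n → ℝ)
    (hX : ∀ j, X j = y j • μ + Ξ j)
    (hw : w = ∑ j, a j • X j)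
    (hyhat : ∀ j, yhat j = ⟪X j, w⟫) :
    ⟪μ, w⟫ ≥ ((∑ j, y j * yhat j) -
        2 * δ * σ * Real.sqrt d * Real.sqrt (∑ j, y j ^ 2) * ‖w‖) /
      (σ ^ 2 * d + ∑ j, y j ^ 2) :=
  stmt13_general n d hd σ hσ μ hμ y Ξ hperp δ hδ0 hδ1 hop a X w yhat hX hw hyhat
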